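/- Let ν : ℝ³ → ℝ be a measurable function satisfying ν₀(1+|v|) ≤ ν(v) ≤ ν₁(1+|v|) for constants ν₀, ν₁ > 0, and let M(v) = (2π)^{−3/2} e^{−|v|²/2}. For j ∈ {−1, 1}, ε ∈ (0,1) and s > 0, define S(ε, s, j) = (ε/2) ∫_{ℝ³} [ε s (v₁ + j) v₂² M(v)] / [ν(v)² + ε²s²(v₁ + j)²] dv. Then there exists a constant C₃ > 0, depending only on ν₀ and ν₁, such that whenever εs ≥ 2: |S(ε, s, j)| ≤ C₃ · ln(εs) / s. -/

import Mathlib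

noncomputable section

open MeasureTheory

/-- The normalized global Maxwellian `M(v) = (2π)^{−3/2} e^{−|v|²/2}` on `ℝ³`. -/
def Mx (v : EuclideanSpace ℝ (Fin 3)) : ℝ :=
  (2 * Real.pi) ^ (-(3:ℝ)/2) * Real.exp (-‖v‖^2 / 2)

/-- The quantity `S(ε, s, j) = (ε/2) ∫ εs(v₁+j) v₂² M / (ν² + ε²s²(v₁+j)²) dv`. -/
def Squant (ν : EuclideanSpace ℝ (Fin 3) → ℝ) (ε s j : ℝ) : ℝ :=
  (ε/2) * ∫ v : EuclideanSpace ℝ (Fin 3),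
    (ε * s * (v 0 + j) * (v 1)^2 * Mx v) / ((ν v)^2 + ε^2 * s^2 * (v 0 + j)^2)

/-!
Write `a = εs` and `t = v₁ + j`. Since `ν ≥ ν₀`, the kernel `a|t| / (ν² + a²t²)` is at most
`2 / (2ν₀ + a|t|)`, and since `|j| ≤ 1` the Gaussian in `v₁` is at most `6 / (1 + t²)`. The
integrand is therefore dominated by a product of one-variable functions. The Gaussian factors in
`v₂, v₃` have bounded integrals, while splitting at `|t| = 1` gives
`∫ dt / ((2ν₀ + a|t|)(1 + t²)) ≤ (2 log(1 + a/(2ν₀)) + π) / a`: the logarithm comes from the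
region `|t| ≤ 1`, where the kernel is not yet small. The prefactor `ε/2` turns `1/a` into `1/s`,
and `log(1 + a/(2ν₀)) ≤ (2ν₀)⁻¹ + log a` is dominated by `log a` once `a ≥ 2`.
-/

open Real MeasureTheory

theorem integral_euclideanSpace_prod {ι : Type*} [Fintype ι] (G : ι → ℝ → ℝ) :
    ∫ v : EuclideanSpace ℝ ι, ∏ i, G i (v i) = ∏ i, ∫ x, G i x :=
  ((PiLp.volume_preserving_toLp ι).integral_comp
      (MeasurableEquiv.toLp 2 (ι → ℝ)).measurableEmbedding _).symm.trans
    (integral_fintype_prod_eq_prod G)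

theorem MeasureTheory.Integrable.euclideanSpace_prod {ι : Type*} [Fintype ι] {G : ι → ℝ → ℝ}
    (hG : ∀ i, Integrable (G i)) :
    Integrable fun v : EuclideanSpace ℝ ι => ∏ i, G i (v i) :=
  ((PiLp.volume_preserving_ofLp ι).integrable_comp_emb
    (MeasurableEquiv.toLp 2 (ι → ℝ)).symm.measurableEmbedding).2 (.fintype_prod hG)

section CauchyLogIntegral

variable {m a : ℝ}

theorem integrable_inv_add_mul_abs_mul_one_add_sq (hm : 0 < m) (ha : 0 ≤ a) :
    Integrable fun x : ℝ => ((m + a * |x|) * (1 + x ^ 2))⁻¹ := by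
  refine (integrable_inv_one_add_sq.const_mul m⁻¹).mono' (by fun_prop (disch := positivity))
    (.of_forall fun x => ?_)
  rw [norm_inv, norm_of_nonneg (by positivity), mul_inv]
  gcongr
  linarith [mul_nonneg ha (abs_nonneg x)]

theorem integral_Icc_inv_add_mul_abs (hm : 0 < m) (ha : 0 < a) :
    ∫ x in Set.Icc (-1 : ℝ) 1, (m + a * |x|)⁻¹ = 2 * log ((m + a) / m) / a := by
  have hcont : Continuous fun x : ℝ => (m + a * |x|)⁻¹ :=
    (by fun_prop : Continuous fun x : ℝ => m + a * |x|).inv₀ fun x => by positivity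
  have hii := fun u w => hcont.intervalIntegrable (μ := volume) u w
  have half : ∫ x in (0 : ℝ)..1, (m + a * |x|)⁻¹ = log ((m + a) / m) / a := by
    rw [intervalIntegral.integral_congr (g := fun x => (a * x + m)⁻¹) fun x hx => by
        rw [Set.uIcc_of_le zero_le_one] at hx; simp [abs_of_nonneg hx.1, add_comm],
      intervalIntegral.integral_comp_mul_add (fun y => y⁻¹) ha.ne', mul_zero, zero_add,
      mul_one, integral_inv_of_pos hm (by linarith), smul_eq_mul, add_comm a, inv_mul_eq_div]
  rw [integral_Icc_eq_integral_Ioc, ← intervalIntegral.integral_of_le (by norm_num),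
    ← intervalIntegral.integral_add_adjacent_intervals (hii (-1) 0) (hii 0 1)]
  have sym : ∫ x in (-1 : ℝ)..0, (m + a * |x|)⁻¹ = ∫ x in (0 : ℝ)..1, (m + a * |x|)⁻¹ := by
    simpa using (intervalIntegral.integral_comp_neg (a := 0) (b := 1)
      (fun x => (m + a * |x|)⁻¹)).symm
  rw [sym, half]; ring

theorem integral_inv_add_mul_abs_mul_one_add_sq_le (hm : 0 < m) (ha : 0 < a) :
    ∫ x : ℝ, ((m + a * |x|) * (1 + x ^ 2))⁻¹ ≤ (2 * log ((m + a) / m) + π) / a := by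
  have hnear : Integrable ((Set.Icc (-1 : ℝ) 1).indicator fun x => (m + a * |x|)⁻¹) :=
    (integrable_indicator_iff measurableSet_Icc).2
      (Continuous.integrableOn_Icc (by fun_prop (disch := intro x; positivity)))
  have hfar : Integrable fun x : ℝ => a⁻¹ * (1 + x ^ 2)⁻¹ :=
    integrable_inv_one_add_sq.const_mul _
  have hle : ∀ x : ℝ, ((m + a * |x|) * (1 + x ^ 2))⁻¹
      ≤ (Set.Icc (-1 : ℝ) 1).indicator (fun x => (m + a * |x|)⁻¹) x + a⁻¹ * (1 + x ^ 2)⁻¹ := by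
    intro x
    rw [mul_inv]
    rcases le_or_gt |x| 1 with hx | hx
    · rw [Set.indicator_of_mem (show x ∈ Set.Icc (-1 : ℝ) 1 from abs_le.1 hx)]
      have := mul_le_of_le_one_right (by positivity : 0 ≤ (m + a * |x|)⁻¹)
        (inv_le_one_of_one_le₀ (by nlinarith) : (1 + x ^ 2)⁻¹ ≤ 1)
      linarith [(by positivity : 0 ≤ a⁻¹ * (1 + x ^ 2)⁻¹)]
    · have := mul_le_mul_of_nonneg_right
        (inv_anti₀ ha (by nlinarith) : (m + a * |x|)⁻¹ ≤ a⁻¹) (by positivity : 0 ≤ (1 + x ^ 2)⁻¹)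
      linarith [Set.indicator_nonneg (fun y _ => by positivity : ∀ y ∈ Set.Icc (-1 : ℝ) 1,
        0 ≤ (m + a * |y|)⁻¹) x]
  calc ∫ x : ℝ, ((m + a * |x|) * (1 + x ^ 2))⁻¹
      ≤ ∫ x, ((Set.Icc (-1 : ℝ) 1).indicator (fun x => (m + a * |x|)⁻¹) x
          + a⁻¹ * (1 + x ^ 2)⁻¹) :=
        integral_mono (integrable_inv_add_mul_abs_mul_one_add_sq hm ha.le) (hnear.add hfar) hle
    _ = 2 * log ((m + a) / m) / a + a⁻¹ * π := by
        rw [integral_add hnear hfar, integral_indicator measurableSet_Icc,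
          integral_Icc_inv_add_mul_abs hm ha, integral_const_mul, integral_univ_inv_one_add_sq]
    _ = (2 * log ((m + a) / m) + π) / a := by ring

end CauchyLogIntegral

theorem div_sq_add_sq_le_two_div {m n t : ℝ} (hm : 0 < m) (hmn : m ≤ n) (ht : 0 ≤ t) :
    t / (n ^ 2 + t ^ 2) ≤ 2 / (2 * m + t) := by
  have hn : 0 < n := hm.trans_le hmn
  rw [div_le_div_iff₀ (by positivity) (by positivity)]
  nlinarith [sq_nonneg (m - t), mul_le_mul hmn hmn hm.le hn.le]

theorem exp_neg_sq_div_two_le {x j : ℝ} (hj : |j| ≤ 1) :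
    exp (-x ^ 2 / 2) ≤ 6 / (1 + (x + j) ^ 2) := by
  rw [le_div_iff₀ (by positivity)]
  have hexp : (x ^ 2 / 2 + 1) * exp (-x ^ 2 / 2) ≤ 1 := by
    calc (x ^ 2 / 2 + 1) * exp (-x ^ 2 / 2) ≤ exp (x ^ 2 / 2) * exp (-x ^ 2 / 2) := by
          gcongr; exact add_one_le_exp _
      _ = 1 := by rw [← exp_add]; ring_nf; exact exp_zero
  have hj2 : j ^ 2 ≤ 1 := by nlinarith [abs_nonneg j, sq_abs j]
  nlinarith [sq_nonneg (x - j), exp_pos (-x ^ 2 / 2)]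

theorem sq_mul_exp_neg_sq_div_two_le (y : ℝ) :
    y ^ 2 * exp (-y ^ 2 / 2) ≤ 4 * exp (-y ^ 2 / 4) := by
  have hsplit : exp (-y ^ 2 / 2) = exp (-y ^ 2 / 4) * exp (-y ^ 2 / 4) := by
    rw [← exp_add]; ring_nf
  have hquarter : y ^ 2 / 4 * exp (-y ^ 2 / 4) ≤ 1 := by
    calc y ^ 2 / 4 * exp (-y ^ 2 / 4) ≤ exp (y ^ 2 / 4) * exp (-y ^ 2 / 4) := by
          gcongr; linarith [add_one_le_exp (y ^ 2 / 4)]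
      _ = 1 := by rw [← exp_add]; ring_nf; exact exp_zero
  rw [hsplit]
  nlinarith [exp_pos (-y ^ 2 / 4)]

theorem Mx_le (v : EuclideanSpace ℝ (Fin 3)) :
    Mx v ≤ exp (-v 0 ^ 2 / 2) * exp (-v 1 ^ 2 / 2) * exp (-v 2 ^ 2 / 2) := by
  have hP : (2 * π) ^ (-(3 : ℝ) / 2) ≤ 1 :=
    rpow_le_one_of_one_le_of_nonpos (by nlinarith [pi_gt_three]) (by norm_num)
  have hnorm : -‖v‖ ^ 2 / 2 = -v 0 ^ 2 / 2 + -v 1 ^ 2 / 2 + -v 2 ^ 2 / 2 := by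
    rw [EuclideanSpace.real_norm_sq_eq, Fin.sum_univ_three]; ring
  rw [Mx, hnorm, exp_add, exp_add]
  exact mul_le_of_le_one_left (by positivity) hP

theorem Mx_nonneg (v : EuclideanSpace ℝ (Fin 3)) : 0 ≤ Mx v := by
  unfold Mx; positivity

def squantMajorant (m a j : ℝ) (v : EuclideanSpace ℝ (Fin 3)) : ℝ :=
  ((m + a * |v 0 + j|) * (1 + (v 0 + j) ^ 2))⁻¹ * exp (-v 1 ^ 2 / 4) * exp (-v 2 ^ 2 / 2)

theorem abs_squant_integrand_le {m n a j : ℝ} (hm : 0 < m) (hmn : m ≤ n) (ha : 0 < a)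
    (hj : |j| ≤ 1) (v : EuclideanSpace ℝ (Fin 3)) :
    |a * (v 0 + j) * v 1 ^ 2 * Mx v / (n ^ 2 + a ^ 2 * (v 0 + j) ^ 2)|
      ≤ 48 * squantMajorant (2 * m) a j v := by
  have hn : 0 < n := hm.trans_le hmn
  set t := a * |v 0 + j|
  have hkernel : t / (n ^ 2 + t ^ 2) ≤ 2 / (2 * m + t) :=
    div_sq_add_sq_le_two_div hm hmn (by positivity)
  calc |a * (v 0 + j) * v 1 ^ 2 * Mx v / (n ^ 2 + a ^ 2 * (v 0 + j) ^ 2)|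
      = t / (n ^ 2 + t ^ 2) * (v 1 ^ 2 * Mx v) := by
        rw [abs_div, abs_of_pos (by positivity : 0 < n ^ 2 + a ^ 2 * (v 0 + j) ^ 2),
          abs_mul, abs_mul, abs_mul, abs_of_pos ha, abs_of_nonneg (Mx_nonneg v), abs_sq,
          mul_pow, sq_abs]
        ring
    _ ≤ 2 / (2 * m + t) * (v 1 ^ 2 * (exp (-v 0 ^ 2 / 2) * exp (-v 1 ^ 2 / 2)
          * exp (-v 2 ^ 2 / 2))) :=
        mul_le_mul hkernel (mul_le_mul_of_nonneg_left (Mx_le v) (sq_nonneg _))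
          (mul_nonneg (sq_nonneg _) (Mx_nonneg v)) (by positivity)
    _ = 2 / (2 * m + t) * (exp (-v 0 ^ 2 / 2) * (v 1 ^ 2 * exp (-v 1 ^ 2 / 2))
          * exp (-v 2 ^ 2 / 2)) := by ring
    _ ≤ 2 / (2 * m + t) * (6 / (1 + (v 0 + j) ^ 2) * (4 * exp (-v 1 ^ 2 / 4))
          * exp (-v 2 ^ 2 / 2)) := by
        gcongr _ * (?_ * ?_ * _)
        · exact exp_neg_sq_div_two_le hj
        · exact sq_mul_exp_neg_sq_div_two_le _
    _ = 48 * squantMajorant (2 * m) a j v := by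
        rw [squantMajorant, mul_inv]; ring

theorem exp_neg_sq_div_eq (c x : ℝ) : exp (-x ^ 2 / c) = exp (-c⁻¹ * x ^ 2) := by
  ring_nf

theorem integral_exp_neg_sq_div_le {c : ℝ} (hc : 0 < c) :
    ∫ x : ℝ, exp (-x ^ 2 / c) ≤ √(4 * c) := by
  simp_rw [exp_neg_sq_div_eq, integral_gaussian, div_inv_eq_mul]
  exact sqrt_le_sqrt (by nlinarith [pi_le_four])

theorem integrable_exp_neg_sq_div {c : ℝ} (hc : 0 < c) :
    Integrable fun x : ℝ => exp (-x ^ 2 / c) := by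
  simpa only [exp_neg_sq_div_eq] using integrable_exp_neg_mul_sq (inv_pos.2 hc)

section Majorant

variable {m a : ℝ} (j : ℝ)

theorem squantMajorant_eq_prod (v : EuclideanSpace ℝ (Fin 3)) :
    squantMajorant m a j v = ∏ i, ![fun x => ((m + a * |x + j|) * (1 + (x + j) ^ 2))⁻¹,
      fun y => exp (-y ^ 2 / 4), fun z => exp (-z ^ 2 / 2)] i (v i) := by
  simp [squantMajorant, Fin.prod_univ_three, mul_assoc]

theorem integrable_squantMajorant (hm : 0 < m) (ha : 0 ≤ a) :
    Integrable (squantMajorant m a j) := by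
  rw [funext (squantMajorant_eq_prod j)]
  refine .euclideanSpace_prod fun i => ?_
  fin_cases i
  · exact (integrable_inv_add_mul_abs_mul_one_add_sq hm ha).comp_add_right j
  · exact integrable_exp_neg_sq_div (by norm_num)
  · exact integrable_exp_neg_sq_div (by norm_num)

theorem integral_squantMajorant_le (hm : 0 < m) (ha : 0 < a) :
    ∫ v, squantMajorant m a j v ≤ 12 * (2 * log ((m + a) / m) + π) / a := by
  have hK := integral_inv_add_mul_abs_mul_one_add_sq_le hm ha
  have hY : ∫ y : ℝ, exp (-y ^ 2 / 4) ≤ 4 :=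
    (integral_exp_neg_sq_div_le (by norm_num)).trans (sqrt_le_iff.2 ⟨by norm_num, by norm_num⟩)
  have hZ : ∫ z : ℝ, exp (-z ^ 2 / 2) ≤ 3 :=
    (integral_exp_neg_sq_div_le (by norm_num)).trans (sqrt_le_iff.2 ⟨by norm_num, by norm_num⟩)
  rw [funext (squantMajorant_eq_prod j), integral_euclideanSpace_prod, Fin.prod_univ_three]
  simp only [Matrix.cons_val_zero, Matrix.cons_val_one, Matrix.cons_val_two, Matrix.vecHead,
    Matrix.vecTail, Function.comp_apply, Fin.succ_zero_eq_one,
    integral_add_right_eq_self fun x : ℝ => ((m + a * |x|) * (1 + x ^ 2))⁻¹]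
  have hK₀ : 0 ≤ ∫ x : ℝ, ((m + a * |x|) * (1 + x ^ 2))⁻¹ :=
    integral_nonneg fun x => by positivity
  have hK_bound₀ := hK₀.trans hK
  have hY₀ : 0 ≤ ∫ y : ℝ, exp (-y ^ 2 / 4) := integral_nonneg fun y => (exp_pos _).le
  calc _ ≤ (2 * log ((m + a) / m) + π) / a * 4 * 3 := by gcongr
    _ = 12 * (2 * log ((m + a) / m) + π) / a := by ring

end Majorant

theorem abs_Squant_le {ν₀ ε s j : ℝ} {ν : EuclideanSpace ℝ (Fin 3) → ℝ} (hν₀ : 0 < ν₀)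
    (hν : ∀ v, ν₀ ≤ ν v) (hε : 0 < ε) (hs : 0 < s) (hj : |j| ≤ 1) :
    |Squant ν ε s j| ≤ 288 * (2 * log ((2 * ν₀ + ε * s) / (2 * ν₀)) + π) / s := by
  have ha : 0 < ε * s := mul_pos hε hs
  have hintegral : ‖∫ v : EuclideanSpace ℝ (Fin 3),
      ε * s * (v 0 + j) * v 1 ^ 2 * Mx v / (ν v ^ 2 + (ε * s) ^ 2 * (v 0 + j) ^ 2)‖
      ≤ 48 * (12 * (2 * log ((2 * ν₀ + ε * s) / (2 * ν₀)) + π) / (ε * s)) := by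
    refine (norm_integral_le_of_norm_le
      ((integrable_squantMajorant j (by positivity) ha.le).const_mul 48)
      (.of_forall fun v => abs_squant_integrand_le hν₀ (hν v) ha hj v)).trans ?_
    rw [integral_const_mul]
    gcongr
    exact integral_squantMajorant_le j (by positivity) ha
  rw [Squant, abs_mul, abs_of_pos (half_pos hε)]
  simp_rw [← mul_pow] at hintegral ⊢
  calc ε / 2 * ‖_‖
      ≤ ε / 2 * (48 * (12 * (2 * log ((2 * ν₀ + ε * s) / (2 * ν₀)) + π) / (ε * s))) := by
        gcongr
    _ = 288 * (2 * log ((2 * ν₀ + ε * s) / (2 * ν₀)) + π) / s := by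
        field_simp; ring

theorem two_mul_log_add_pi_le {m a : ℝ} (hm : 0 < m) (ha : 2 ≤ a) :
    2 * log ((m + a) / m) + π ≤ (2 + 4 * m⁻¹ + 2 * π) * log a := by
  have hlog : log ((m + a) / m) ≤ m⁻¹ + log a := by
    calc log ((m + a) / m) ≤ log ((1 + m⁻¹) * a) := by
          refine log_le_log (by positivity) ?_
          rw [div_le_iff₀ hm]
          nlinarith [mul_inv_cancel₀ hm.ne']
      _ = log (1 + m⁻¹) + log a := log_mul (by positivity) (by positivity)
      _ ≤ m⁻¹ + log a := by linarith [log_le_sub_one_of_pos (by positivity : 0 < 1 + m⁻¹)]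
  have hhalf : 1 / 2 ≤ log a := by
    linarith [log_two_gt_d9, log_le_log two_pos ha]
  nlinarith [inv_pos.2 hm, pi_pos]

theorem stmt10_general (ν₀ ν₁ : ℝ) (hν₀ : 0 < ν₀) :
    ∃ C₃ > (0:ℝ),
      ∀ ν : EuclideanSpace ℝ (Fin 3) → ℝ, Measurable ν →
        (∀ v, ν₀ * (1 + ‖v‖) ≤ ν v ∧ ν v ≤ ν₁ * (1 + ‖v‖)) →
        ∀ j : ℝ, (j = -1 ∨ j = 1) →
        ∀ ε ∈ Set.Ioo (0:ℝ) 1, ∀ s : ℝ, 0 < s → 2 ≤ ε * s →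
          |Squant ν ε s j| ≤ C₃ * Real.log (ε * s) / s := by
  refine ⟨288 * (2 + 4 * (2 * ν₀)⁻¹ + 2 * π), by positivity, ?_⟩
  intro ν _ hν j hj ε hε s hs hεs
  have hν₀_le : ∀ v, ν₀ ≤ ν v := fun v =>
    (le_mul_of_one_le_right hν₀.le (by linarith [norm_nonneg v])).trans (hν v).1
  have hj_abs : |j| ≤ 1 := by rcases hj with rfl | rfl <;> norm_num
  calc |Squant ν ε s j|
      ≤ 288 * (2 * log ((2 * ν₀ + ε * s) / (2 * ν₀)) + π) / s :=
        abs_Squant_le hν₀ hν₀_le hε.1 hs hj_abs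
    _ ≤ 288 * ((2 + 4 * (2 * ν₀)⁻¹ + 2 * π) * log (ε * s)) / s := by
        gcongr
        exact two_mul_log_add_pi_le (by positivity) hεs
    _ = 288 * (2 + 4 * (2 * ν₀)⁻¹ + 2 * π) * log (ε * s) / s := by ring

theorem stmt10 (ν₀ ν₁ : ℝ) (hν₀ : 0 < ν₀) (hν₁ : 0 < ν₁) :
    ∃ C₃ > (0:ℝ),
      ∀ ν : EuclideanSpace ℝ (Fin 3) → ℝ, Measurable ν →
        (∀ v, ν₀ * (1 + ‖v‖) ≤ ν v ∧ ν v ≤ ν₁ * (1 + ‖v‖)) →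
        ∀ j : ℝ, (j = -1 ∨ j = 1) →
        ∀ ε ∈ Set.Ioo (0:ℝ) 1, ∀ s : ℝ, 0 < s → 2 ≤ ε * s →
          |Squant ν ε s j| ≤ C₃ * Real.log (ε * s) / s :=
  stmt10_general ν₀ ν₁ hν₀

end
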